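/- arXiv:2111.14398 — 13 statements merged into one kernel-verified Lean document; each statement's English description precedes it below -/
import Mathlib

section
/- For every n ≥ 2, ∑_{p=0}^{n-1} C(n-1, p) · (n-p-1)! = ⌊e · (n-1)!⌋, where C(n-1,p) denotes the binomial coefficient and e is Euler's number. -/
open Finset

lemma aux_sum_floor (m : ℕ) (hm : 1 ≤ m) :
    ∑ p ∈ Finset.range (m + 1), m.choose p * (m - p).factorial =
      ⌊Real.exp 1 * (m.factorial : ℝ)⌋₊ := by
  have hT : ∀ i : ℕ, (1:ℝ) ^ i / i.factorial = 1 / i.factorial := by intro i; rw [one_pow]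
  set T : ℝ := ∑ i ∈ range (m + 1), (1:ℝ) / i.factorial with hTdef
  have hmf : (0:ℝ) < m.factorial := by positivity
  have hS : ((∑ p ∈ Finset.range (m+1), m.choose p * (m-p).factorial : ℕ) : ℝ)
      = m.factorial * T := by
    push_cast
    rw [hTdef, Finset.mul_sum]
    refine Finset.sum_congr rfl ?_
    intro p hp
    have hp' : p ≤ m := Nat.lt_succ_iff.mp (Finset.mem_range.mp hp)
    have h := Nat.choose_mul_factorial_mul_factorial hp'
    have h' : ((m.choose p : ℝ) * p.factorial) * (m-p).factorial = m.factorial := by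
      exact_mod_cast congrArg (Nat.cast : ℕ → ℝ) h
    have hpf : (0:ℝ) < p.factorial := by positivity
    field_simp
    linarith [h']
  symm
  rw [Nat.floor_eq_iff (by positivity)]
  constructor
  · -- lower bound
    rw [hS]
    have hle := Real.sum_le_exp_of_nonneg (x := 1) zero_le_one (m + 2)
    have : T + 1 / (m+1).factorial ≤ Real.exp 1 := by
      have : ∑ i ∈ range (m + 2), (1:ℝ) ^ i / i.factorial
          = T + 1 / (m+1).factorial := by
        rw [Finset.sum_range_succ, hTdef]
        simp [hT]
      linarith [hle, this ▸ hle]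
    have h2 := mul_le_mul_of_nonneg_left this hmf.le
    have hp : (0:ℝ) < (m.factorial : ℝ) * (1 / ((m+1).factorial : ℝ)) := by positivity
    nlinarith [h2, hp]
  · -- upper bound
    rw [hS]
    have hub := Real.exp_bound' (x := 1) zero_le_one le_rfl (n := m + 1) (Nat.succ_pos m)
    have hsum : ∑ i ∈ range (m + 1), (1:ℝ) ^ i / i.factorial = T := by
      simp [hTdef, hT]
    rw [hsum, one_pow, one_mul] at hub
    -- exp 1 ≤ T + (m+2)/((m+1)! * (m+1))
    have hfac : ((m+1).factorial : ℝ) = (m+1) * m.factorial := by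
      push_cast [Nat.factorial_succ]; ring
    have hm1 : (0:ℝ) < (m:ℝ) + 1 := by positivity
    have hr : ((m:ℝ)+1+1) / ((m+1).factorial * (m+1)) * m.factorial < 1 := by
      rw [hfac]
      rw [div_mul_eq_mul_div, div_lt_one (by positivity)]
      have hm' : (1:ℝ) ≤ m := by exact_mod_cast hm
      nlinarith [hmf, hm']
    have : Real.exp 1 * m.factorial ≤ T * m.factorial
        + ((m:ℝ)+1+1) / ((m+1).factorial * (m+1)) * m.factorial := by
      have := mul_le_mul_of_nonneg_right hub hmf.le
      push_cast at this ⊢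
      linarith
    nlinarith [this, hr]

/-- For every `n ≥ 2`, `∑_{p=0}^{n-1} C(n-1,p) * (n-p-1)! = ⌊e * (n-1)!⌋`. -/
theorem sum_choose_factorial_eq_floor_e (n : ℕ) (hn : 2 ≤ n) :
    ∑ p ∈ Finset.range n, (n - 1).choose p * (n - 1 - p).factorial =
      ⌊Real.exp 1 * ((n - 1).factorial : ℝ)⌋₊ := by
  obtain ⟨m, rfl⟩ : ∃ m, n = m + 1 := ⟨n - 1, (Nat.succ_pred_eq_of_pos (by omega)).symm⟩
  have hm : 1 ≤ m := by omega
  simpa using aux_sum_floor m hm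
end

section
/- Let L be a Lie algebra over a field, a, b ∈ L, and for n ∈ ℕ set b_n := (ad a)^n(b) and w_{i,j} := [b_i, b_j]. Then for all i ∈ ℕ and n ≥ 1, w_{i,i+n} = ∑_{p=0}^{⌊(n-1)/2⌋} (-1)^p C(n-1-p, p) (ad a)^{n-1-2p}(w_{i+p, i+p+1}). -/
private lemma choose_pascal_aux (k q : ℕ) (hk : 1 ≤ k) :
    (k - q).choose (q + 1) = (k - 1 - q).choose (q + 1) + (k - 1 - q).choose q := by
  rcases le_or_gt (q + 1) k with h | h
  · rw [show k - q = (k - 1 - q) + 1 by omega, Nat.choose_succ_succ,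
      Nat.succ_eq_add_one, Nat.add_comm]
  · rw [show k - q = 0 by omega, show k - 1 - q = 0 by omega,
      Nat.choose_eq_zero_of_lt (show 0 < q + 1 by omega),
      Nat.choose_eq_zero_of_lt (show 0 < q by omega)]

private lemma sum_shift_aux {M : Type*} [AddCommGroup M] (m : ℕ) (T T' S : ℕ → M)
    (h0 : T' 0 = T 0) (hlast : T (m + 1) = 0)
    (hstep : ∀ q < m, T (q + 1) = T' (q + 1) - S q) :
    (∑ p ∈ Finset.range (m + 1), T' p) - ∑ q ∈ Finset.range m, S q =
      ∑ p ∈ Finset.range (m + 2), T p := by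
  rw [Finset.sum_range_succ (f := T), hlast, add_zero, Finset.sum_range_succ' T,
    Finset.sum_range_succ' T',
    Finset.sum_congr rfl (fun q hq => hstep q (Finset.mem_range.mp hq)),
    Finset.sum_sub_distrib, h0]
  abel

private lemma ad_pow_bracket_expansion {K : Type*} [Field K] {L : Type*}
    [LieRing L] [LieAlgebra K L] (a b : L) :
    ∀ n, 1 ≤ n → ∀ i,
      ⁅((LieAlgebra.ad K L a) ^ i) b, ((LieAlgebra.ad K L a) ^ (i + n)) b⁆ =
        ∑ p ∈ Finset.range n,
          ((-1 : ℤ) ^ p * ((n - 1 - p).choose p : ℤ)) •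
            ((LieAlgebra.ad K L a) ^ (n - 1 - 2 * p))
              ⁅((LieAlgebra.ad K L a) ^ (i + p)) b,
                ((LieAlgebra.ad K L a) ^ (i + p + 1)) b⁆ := by
  set D := LieAlgebra.ad K L a with hDdef
  have hstep : ∀ j k : ℕ, ⁅(D ^ j) b, (D ^ (k + 1)) b⁆ =
      D ⁅(D ^ j) b, (D ^ k) b⁆ - ⁅(D ^ (j + 1)) b, (D ^ k) b⁆ := by
    intro j k
    have h : D ⁅(D ^ j) b, (D ^ k) b⁆ =
        ⁅(D ^ (j + 1)) b, (D ^ k) b⁆ + ⁅(D ^ j) b, (D ^ (k + 1)) b⁆ := by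
      rw [pow_succ' D j, pow_succ' D k, Module.End.mul_apply, Module.End.mul_apply]
      exact leibniz_lie a _ _
    rw [h]; abel
  intro n
  induction n using Nat.strong_induction_on with
  | _ n IH =>
    match n with
    | 0 => intro h; omega
    | 1 =>
      intro _ i
      simp
    | 2 =>
      intro _ i
      rw [hstep i (i + 1), lie_self, sub_zero, Finset.sum_range_succ, Finset.sum_range_one]
      norm_num
    | (k + 3) =>
      intro _ i
      have IH1 := IH (k + 2) (by omega) (by omega) i
      have IH2 := IH (k + 1) (by omega) (by omega) (i + 1)
      have key : ⁅(D ^ i) b, (D ^ (i + (k + 3))) b⁆ =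
          D ⁅(D ^ i) b, (D ^ (i + (k + 2))) b⁆ -
            ⁅(D ^ (i + 1)) b, (D ^ ((i + 1) + (k + 1))) b⁆ := by
        have h := hstep i (i + (k + 2))
        rw [show i + (k + 2) + 1 = i + (k + 3) by omega] at h
        rw [show (i + 1) + (k + 1) = i + (k + 2) by omega]
        exact h
      rw [key, IH1, IH2, map_sum]
      have hA : ∀ p ∈ Finset.range (k + 2),
          D (((-1 : ℤ) ^ p * ((k + 2 - 1 - p).choose p : ℤ)) •
              ((D ^ (k + 2 - 1 - 2 * p))
                ⁅(D ^ (i + p)) b, (D ^ (i + p + 1)) b⁆)) =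
            ((-1 : ℤ) ^ p * ((k + 2 - 1 - p).choose p : ℤ)) •
              ((D ^ (k + 3 - 1 - 2 * p))
                ⁅(D ^ (i + p)) b, (D ^ (i + p + 1)) b⁆) := by
        intro p _
        by_cases h2 : 2 * p ≤ k + 1
        · rw [map_zsmul, show k + 3 - 1 - 2 * p = (k + 2 - 1 - 2 * p) + 1 by omega,
            pow_succ' D (k + 2 - 1 - 2 * p), Module.End.mul_apply]
        · rw [show ((k + 2 - 1 - p).choose p : ℤ) = 0 by
              norm_cast; exact Nat.choose_eq_zero_of_lt (by omega),
            mul_zero, zero_smul, zero_smul, map_zero]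
      rw [Finset.sum_congr rfl hA]
      have h0 : ((-1 : ℤ) ^ 0 * ((k + 2 - 1 - 0).choose 0 : ℤ)) •
            ((D ^ (k + 3 - 1 - 2 * 0)) ⁅(D ^ (i + 0)) b, (D ^ (i + 0 + 1)) b⁆) =
          ((-1 : ℤ) ^ 0 * ((k + 3 - 1 - 0).choose 0 : ℤ)) •
            ((D ^ (k + 3 - 1 - 2 * 0)) ⁅(D ^ (i + 0)) b, (D ^ (i + 0 + 1)) b⁆) := by
        norm_num
      have hlast : ((-1 : ℤ) ^ (k + 2) * ((k + 3 - 1 - (k + 2)).choose (k + 2) : ℤ)) •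
            ((D ^ (k + 3 - 1 - 2 * (k + 2)))
              ⁅(D ^ (i + (k + 2))) b, (D ^ (i + (k + 2) + 1)) b⁆) = 0 := by
        rw [show ((k + 3 - 1 - (k + 2)).choose (k + 2) : ℤ) = 0 by
            norm_cast; exact Nat.choose_eq_zero_of_lt (by omega), mul_zero, zero_smul]
      have hs : ∀ q < k + 1,
          ((-1 : ℤ) ^ (q + 1) * ((k + 3 - 1 - (q + 1)).choose (q + 1) : ℤ)) •
              ((D ^ (k + 3 - 1 - 2 * (q + 1)))
                ⁅(D ^ (i + (q + 1))) b, (D ^ (i + (q + 1) + 1)) b⁆) =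
            ((-1 : ℤ) ^ (q + 1) * ((k + 2 - 1 - (q + 1)).choose (q + 1) : ℤ)) •
                ((D ^ (k + 3 - 1 - 2 * (q + 1)))
                  ⁅(D ^ (i + (q + 1))) b, (D ^ (i + (q + 1) + 1)) b⁆) -
              ((-1 : ℤ) ^ q * ((k + 1 - 1 - q).choose q : ℤ)) •
                ((D ^ (k + 1 - 1 - 2 * q))
                  ⁅(D ^ (i + 1 + q)) b, (D ^ (i + 1 + q + 1)) b⁆) := by
        intro q _
        have hc : ((-1 : ℤ) ^ (q + 1) * ((k + 3 - 1 - (q + 1)).choose (q + 1) : ℤ)) =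
            ((-1 : ℤ) ^ (q + 1) * ((k + 2 - 1 - (q + 1)).choose (q + 1) : ℤ)) -
              ((-1 : ℤ) ^ q * ((k + 1 - 1 - q).choose q : ℤ)) := by
          rw [show k + 3 - 1 - (q + 1) = (k + 1) - q by omega,
            show k + 2 - 1 - (q + 1) = (k + 1) - 1 - q by omega,
            show k + 1 - 1 - q = (k + 1) - 1 - q by omega,
            choose_pascal_aux (k + 1) q (by omega)]
          push_cast
          ring
        rw [show i + 1 + q = i + (q + 1) by omega,
          show k + 1 - 1 - 2 * q = k + 3 - 1 - 2 * (q + 1) by omega,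
          hc, sub_smul]
      exact sum_shift_aux (k + 1) _ _ _ h0 hlast hs

/-- In a Lie algebra over a field, with `b_n := (ad a)^n b` and
`w_{i,j} := ⁅b_i, b_j⁆`, for all `i` and `n ≥ 1`:
`w_{i,i+n} = ∑_{p=0}^{⌊(n-1)/2⌋} (-1)^p C(n-1-p,p) (ad a)^(n-1-2p) (w_{i+p,i+p+1})`. -/
theorem bracket_iterate_ad_expansion {K : Type*} [Field K] {L : Type*}
    [LieRing L] [LieAlgebra K L] (a b : L) (i n : ℕ) (hn : 1 ≤ n) :
    ⁅(fun x => ⁅a, x⁆)^[i] b, (fun x => ⁅a, x⁆)^[i + n] b⁆ =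
      ∑ p ∈ Finset.range ((n - 1) / 2 + 1),
        ((-1 : ℤ) ^ p * ((n - 1 - p).choose p : ℤ)) •
          (fun x => ⁅a, x⁆)^[n - 1 - 2 * p]
            ⁅(fun x => ⁅a, x⁆)^[i + p] b, (fun x => ⁅a, x⁆)^[i + p + 1] b⁆ := by
  have hfun : (fun x : L => ⁅a, x⁆) = ⇑(LieAlgebra.ad K L a) := rfl
  simp only [hfun, ← Module.End.pow_apply]
  rw [ad_pow_bracket_expansion a b n hn i]
  refine (Finset.sum_subset (fun x hx => Finset.mem_range.mpr ?_) (fun x hx hnx => ?_)).symm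
  · have := Finset.mem_range.mp hx
    omega
  · have h1 := Finset.mem_range.mp hx
    have h2 : (n - 1) / 2 + 1 ≤ x := by
      by_contra h
      exact hnx (Finset.mem_range.mpr (by omega))
    rw [show ((n - 1 - x).choose x : ℤ) = 0 by
        norm_cast; exact Nat.choose_eq_zero_of_lt (by omega), mul_zero, zero_smul]
end

section
/- For all integers r, s, n with 1 ≤ r ≤ s and n ≥ 2s+1, ∑_{p=0}^{r-1} (-1)^p C(n-p-1, n-s-1) C(n-s, p) = (-1)^r · (r(r-n))/(s(n-s)) · C(n-r-1, n-s-1) · C(n-s, r). -/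
lemma aux_alt_sum (s n : ℕ) (hs : 1 ≤ s) (hn : 2 * s + 1 ≤ n) :
    ∀ r, r ≤ s →
    ∑ p ∈ Finset.range r,
        (-1 : ℚ) ^ p * ((n - p - 1).choose (n - s - 1) : ℚ) * ((n - s).choose p : ℚ) =
      (-1 : ℚ) ^ r * ((r : ℚ) * ((r : ℚ) - (n : ℚ))) / ((s : ℚ) * ((n : ℚ) - (s : ℚ))) *
        ((n - r - 1).choose (n - s - 1) : ℚ) * ((n - s).choose r : ℚ) := by
  intro r
  induction r with
  | zero => intro _; simp
  | succ r ih =>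
    intro hr
    have ih' := ih (by omega)
    rw [Finset.sum_range_succ, ih']
    -- abbreviations
    have e1 : n - (r + 1) - 1 = n - r - 2 := by omega
    rw [e1]
    set A : ℚ := ((n - r - 1).choose (n - s - 1) : ℚ) with hA
    set B : ℚ := ((n - r - 2).choose (n - s - 1) : ℚ) with hB
    set C1 : ℚ := ((n - s).choose r : ℚ) with hC1
    set C2 : ℚ := ((n - s).choose (r + 1) : ℚ) with hC2
    -- nat identities
    have h1nat : (n - r - 2).choose (n - s - 1) * (n - r - 1)
        = (n - r - 1).choose (n - s - 1) * (s - r) := by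
      have := Nat.choose_mul_succ_eq (n - r - 2) (n - s - 1)
      have e2 : n - r - 2 + 1 = n - r - 1 := by omega
      have e3 : n - r - 1 - (n - s - 1) = s - r := by omega
      rw [e2, e3] at this
      exact this
    have h2nat : (n - s).choose (r + 1) * (r + 1) = (n - s).choose r * (n - s - r) :=
      Nat.choose_succ_right_eq (n - s) r
    have hc1 : ((n - r - 1 : ℕ) : ℚ) = (n : ℚ) - r - 1 := by
      rw [Nat.sub_sub, Nat.cast_sub (by omega)]; push_cast; ring
    have hc2 : ((s - r : ℕ) : ℚ) = (s : ℚ) - r := by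
      rw [Nat.cast_sub (by omega)]
    have hc3 : ((n - s - r : ℕ) : ℚ) = (n : ℚ) - s - r := by
      rw [Nat.sub_sub, Nat.cast_sub (by omega)]; push_cast; ring
    have h1 : B * ((n : ℚ) - r - 1) = A * ((s : ℚ) - r) := by
      have := congrArg (Nat.cast : ℕ → ℚ) h1nat
      push_cast [-Nat.cast_sub] at this
      rw [hc1, hc2] at this
      exact this
    have h2 : C2 * ((r : ℚ) + 1) = C1 * ((n : ℚ) - s - r) := by
      have := congrArg (Nat.cast : ℕ → ℚ) h2nat
      push_cast [-Nat.cast_sub] at this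
      rw [hc3] at this
      exact this
    have key : ((s : ℚ) - r) * ((n : ℚ) - r - s) * A * C1
        = ((r : ℚ) + 1) * ((n : ℚ) - r - 1) * B * C2 := by
      linear_combination (-((r : ℚ) + 1)) * C2 * h1 - ((s : ℚ) - r) * A * h2
    have hs' : (s : ℚ) ≠ 0 := by positivity
    have hns : (n : ℚ) - s ≠ 0 := by
      have : (s : ℚ) < n := by exact_mod_cast (by omega : s < n)
      linarith
    push_cast
    field_simp
    ring_nf
    linear_combination ((-1 : ℚ)) ^ r * key

/-- For `1 ≤ r ≤ s` and `n ≥ 2s+1`: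
`∑_{p=0}^{r-1} (-1)^p C(n-p-1, n-s-1) C(n-s, p)
  = (-1)^r (r(r-n))/(s(n-s)) C(n-r-1, n-s-1) C(n-s, r)` (in `ℚ`). -/
theorem alternating_binomial_sum (r s n : ℕ) (hr : 1 ≤ r) (hrs : r ≤ s)
    (hn : 2 * s + 1 ≤ n) :
    ∑ p ∈ Finset.range r,
        (-1 : ℚ) ^ p * ((n - p - 1).choose (n - s - 1) : ℚ) * ((n - s).choose p : ℚ) =
      (-1 : ℚ) ^ r * ((r : ℚ) * ((r : ℚ) - (n : ℚ))) / ((s : ℚ) * ((n : ℚ) - (s : ℚ))) *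
        ((n - r - 1).choose (n - s - 1) : ℚ) * ((n - s).choose r : ℚ) :=
  aux_alt_sum s n (le_trans hr hrs) hn r hrs
end

section
/- For integers 1 ≤ r ≤ s and n ≥ 2s+1, define A^r_s(n) := |∑_{p=r}^{s} (-1)^p C(n-1-p, p) (C(n-1-2p, s-p) - C(n-1-2p, s-p-1))|. Then A^r_s(n) = ((n-2s)/s) · C(n-r, n-s) · C(n-s-1, r-1). -/
/-!
The signed summands telescope. With
`T(p) = (-1)^p (n-2s)/s C(n-p, s-p) C(n-s-1, p-1)`, the `p`-th summand equals `T(p) - T(p+1)`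
for `p < s` and `T(s)` for `p = s`, so the sum is `T(r)`, whose absolute value is the right-hand
side since `C(n-r, s-r) = C(n-r, n-s)`. Each of these identities is a rational identity between
factorials once `n`, `s`, `p` are written without truncated subtraction.
-/

open Finset Nat

theorem Finset.sum_Icc_eq_of_telescoping {M : Type*} [AddCommGroup M] {f g : ℕ → M} {r s : ℕ}
    (hrs : r ≤ s) (hstep : ∀ p ∈ Ico r s, f p = g p - g (p + 1)) (htop : f s = g s) :
    ∑ p ∈ Icc r s, f p = g r := by
  rw [← Ico_add_one_right_eq_Icc, sum_Ico_succ_top hrs, sum_congr rfl hstep, htop]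
  simp only [← neg_sub (g (_ + 1)), sum_neg_distrib, sum_Ico_sub g hrs]
  abel

theorem Nat.succ_mul_choose_succ_add (m q : ℕ) :
    (q + 1) * (m + q + 1).choose (q + 1) = (m + 1) * (m + q + 1).choose q := by
  rw [mul_comm, choose_succ_right_eq, mul_comm]
  congr 1
  omega

namespace AlternatingChooseSum

def summand (n s p : ℕ) : ℚ :=
  (-1) ^ p * ((n - 1 - p).choose p : ℚ) *
    (((n - 1 - 2 * p).choose (s - p) : ℚ) -
      if p = s then 0 else ((n - 1 - 2 * p).choose (s - p - 1) : ℚ))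

def tail (n s p : ℕ) : ℚ :=
  (-1) ^ p * (((n : ℚ) - 2 * s) / s) * ((n - p).choose (s - p) : ℚ) *
    ((n - s - 1).choose (p - 1) : ℚ)

/-- `summand_eq_tail_sub_tail` for `p = q + 1`, `s = q + i + 2`, `n = 2s + 1 + m`, after
cancelling the sign. -/
theorem choose_telescoping_identity (q i m : ℕ) :
    ((q : ℚ) + i + 2) * ((q + 2 * i + m + 3).choose (q + 1) : ℚ) *
        (((m + 2 * i + 2).choose (i + 1) : ℚ) - ((m + 2 * i + 2).choose i : ℚ)) =
      ((m : ℚ) + 1) *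
        (((q + 2 * i + m + 4).choose (i + 1) : ℚ) * ((q + i + m + 2).choose q : ℚ) +
          ((q + 2 * i + m + 3).choose i : ℚ) * ((q + i + m + 2).choose (q + 1) : ℚ)) := by
  simp (disch := omega) only [cast_choose]
  rw [show q + 2 * i + m + 3 - (q + 1) = m + 2 * i + 2 by omega,
    show m + 2 * i + 2 - (i + 1) = m + i + 1 by omega,
    show m + 2 * i + 2 - i = m + i + 1 + 1 by omega,
    show q + 2 * i + m + 4 - (i + 1) = q + i + m + 2 + 1 by omega,
    show q + i + m + 2 - q = m + i + 1 + 1 by omega,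
    show q + 2 * i + m + 3 - i = q + i + m + 2 + 1 by omega,
    show q + i + m + 2 - (q + 1) = m + i + 1 by omega,
    show q + 2 * i + m + 4 = q + 2 * i + m + 3 + 1 by omega]
  simp only [factorial_succ (m + i + 1), factorial_succ (q + i + m + 2),
    factorial_succ (q + 2 * i + m + 3), factorial_succ q, factorial_succ i]
  push_cast
  field_simp
  ring

theorem summand_self {n s : ℕ} (hs : 1 ≤ s) (hn : 2 * s + 1 ≤ n) :
    summand n s s = tail n s s := by
  obtain ⟨m, rfl⟩ : ∃ m, n = 2 * s + 1 + m := ⟨n - (2 * s + 1), by omega⟩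
  obtain ⟨q, rfl⟩ : ∃ q, s = q + 1 := ⟨s - 1, by omega⟩
  have key : ((q : ℚ) + 1) * ((m + q + 1).choose (q + 1) : ℚ) =
      ((m : ℚ) + 1) * ((m + q + 1).choose q : ℚ) := by
    exact_mod_cast succ_mul_choose_succ_add m q
  rw [summand, tail, if_pos rfl, sub_zero, Nat.sub_self, choose_zero_right, choose_zero_right,
    show 2 * (q + 1) + 1 + m - 1 - (q + 1) = m + q + 1 by omega,
    show 2 * (q + 1) + 1 + m - (q + 1) - 1 = m + q + 1 by omega, Nat.add_sub_cancel]
  push_cast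
  field_simp
  linear_combination key

theorem summand_eq_tail_sub_tail {n s p : ℕ} (hp : 1 ≤ p) (hps : p < s) (hn : 2 * s + 1 ≤ n) :
    summand n s p = tail n s p - tail n s (p + 1) := by
  obtain ⟨m, rfl⟩ : ∃ m, n = 2 * s + 1 + m := ⟨n - (2 * s + 1), by omega⟩
  obtain ⟨q, rfl⟩ : ∃ q, p = q + 1 := ⟨p - 1, by omega⟩
  obtain ⟨i, rfl⟩ : ∃ i, s = q + i + 2 := ⟨s - q - 2, by omega⟩
  rw [summand, tail, tail, if_neg (by omega),
    show 2 * (q + i + 2) + 1 + m - 1 - (q + 1) = q + 2 * i + m + 3 by omega,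
    show 2 * (q + i + 2) + 1 + m - 1 - 2 * (q + 1) = m + 2 * i + 2 by omega,
    show q + i + 2 - (q + 1) = i + 1 by omega, Nat.add_sub_cancel,
    show 2 * (q + i + 2) + 1 + m - (q + 1) = q + 2 * i + m + 4 by omega,
    show 2 * (q + i + 2) + 1 + m - (q + 1 + 1) = q + 2 * i + m + 3 by omega,
    show q + i + 2 - (q + 1 + 1) = i by omega, Nat.add_sub_cancel,
    show 2 * (q + i + 2) + 1 + m - (q + i + 2) - 1 = q + i + m + 2 by omega]
  push_cast
  field_simp
  linear_combination (-1 : ℚ) ^ (q + 1) * choose_telescoping_identity q i m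

theorem sum_Icc_summand {n r s : ℕ} (hr : 1 ≤ r) (hrs : r ≤ s) (hn : 2 * s + 1 ≤ n) :
    ∑ p ∈ Icc r s, summand n s p = tail n s r :=
  sum_Icc_eq_of_telescoping hrs
    (fun _ hp => summand_eq_tail_sub_tail (hr.trans (mem_Ico.1 hp).1) (mem_Ico.1 hp).2 hn)
    (summand_self (hr.trans hrs) hn)

end AlternatingChooseSum

/-- For `1 ≤ r ≤ s` and `n ≥ 2s+1`, with
`A^r_s(n) := |∑_{p=r}^{s} (-1)^p C(n-1-p,p) (C(n-1-2p,s-p) - C(n-1-2p,s-p-1))|`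
(with `C(m,-1) = 0`), one has `A^r_s(n) = ((n-2s)/s) C(n-r,n-s) C(n-s-1,r-1)`. -/
theorem abs_alternating_sum_eq (r s n : ℕ) (hr : 1 ≤ r) (hrs : r ≤ s)
    (hn : 2 * s + 1 ≤ n) :
    |∑ p ∈ Finset.Icc r s,
        (-1 : ℚ) ^ p * ((n - 1 - p).choose p : ℚ) *
          (((n - 1 - 2 * p).choose (s - p) : ℚ) -
            if p = s then 0 else ((n - 1 - 2 * p).choose (s - p - 1) : ℚ))| =
      ((n : ℚ) - 2 * (s : ℚ)) / (s : ℚ) * ((n - r).choose (n - s) : ℚ) *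
        ((n - s - 1).choose (r - 1) : ℚ) := by
  have hsum := AlternatingChooseSum.sum_Icc_summand hr hrs hn
  simp only [AlternatingChooseSum.summand, AlternatingChooseSum.tail] at hsum
  have hcoef : 0 ≤ ((n : ℚ) - 2 * s) / s :=
    div_nonneg (sub_nonneg.2 (by exact_mod_cast (by omega : 2 * s ≤ n))) s.cast_nonneg
  rw [hsum, abs_mul, abs_mul, abs_mul, abs_pow, abs_neg, abs_one, one_pow, one_mul,
    abs_of_nonneg hcoef, Nat.abs_cast, Nat.abs_cast,
    choose_symm_of_eq_add (show n - r = (n - s) + (s - r) by omega)]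
end

section
/- For integers 1 ≤ r ≤ s and n ≥ 2s+1, with A^r_s(n) := ((n-2s)/s) · C(n-r, n-s) · C(n-s-1, r-1), one has A^r_s(n) ≥ C(n-s-1, s). -/
/-!
With `m = n - s - 1` we have `s · C(m, s) = (n - 2s) · C(m, s - 1)`. Choosing an `(s-1)`-subset
of an `m`-set by first choosing `r - 1` of its elements and then the remaining `s - r` among the
other `m - r + 1 ≤ n - r` elements gives `C(m, s - 1) ≤ C(m, r - 1) · C(n - r, s - r)`, and
`C(n - r, s - r) = C(n - r, n - s)`.
-/

theorem Nat.choose_le_choose_mul_choose_sub (m : ℕ) {a b : ℕ} (hab : a ≤ b) :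
    m.choose b ≤ m.choose a * (m - a).choose (b - a) :=
  Nat.choose_mul hab ▸ Nat.le_mul_of_pos_right _ (Nat.choose_pos hab)

theorem choose_mul_le_sub_mul_choose_mul_choose {r s n : ℕ} (hr : 1 ≤ r) (hrs : r ≤ s)
    (hn : 2 * s + 1 ≤ n) :
    (n - s - 1).choose s * s ≤
      (n - 2 * s) * ((n - r).choose (n - s) * (n - s - 1).choose (r - 1)) := by
  set m := n - s - 1
  have hpascal : m.choose s * s = m.choose (s - 1) * (n - 2 * s) := by
    have := Nat.choose_succ_right_eq m (s - 1)
    rwa [Nat.sub_add_cancel (by omega), show m - (s - 1) = n - 2 * s by omega] at this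
  have hsplit : m.choose (s - 1) ≤ m.choose (r - 1) * (n - r).choose (n - s) :=
    calc m.choose (s - 1) ≤ m.choose (r - 1) * (m - (r - 1)).choose (s - 1 - (r - 1)) :=
          Nat.choose_le_choose_mul_choose_sub m (by omega)
      _ ≤ m.choose (r - 1) * (n - r).choose (s - 1 - (r - 1)) :=
          Nat.mul_le_mul_left _ (Nat.choose_le_choose _ (by omega))
      _ = m.choose (r - 1) * (n - r).choose (n - s) := by
          rw [Nat.choose_symm_of_eq_add (show n - r = s - 1 - (r - 1) + (n - s) by omega)]
  calc m.choose s * s = m.choose (s - 1) * (n - 2 * s) := hpascal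
    _ ≤ m.choose (r - 1) * (n - r).choose (n - s) * (n - 2 * s) := by gcongr
    _ = (n - 2 * s) * ((n - r).choose (n - s) * m.choose (r - 1)) := by ring

/-- For `1 ≤ r ≤ s` and `n ≥ 2s+1`,
`((n-2s)/s) C(n-r, n-s) C(n-s-1, r-1) ≥ C(n-s-1, s)` (in `ℚ`). -/
theorem Ars_ge_choose (r s n : ℕ) (hr : 1 ≤ r) (hrs : r ≤ s)
    (hn : 2 * s + 1 ≤ n) :
    ((n - s - 1).choose s : ℚ) ≤
      ((n : ℚ) - 2 * (s : ℚ)) / (s : ℚ) * ((n - r).choose (n - s) : ℚ) *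
        ((n - s - 1).choose (r - 1) : ℚ) := by
  have hs : (0 : ℚ) < s := by exact_mod_cast (by omega : 0 < s)
  have key : ((n - s - 1).choose s * s : ℚ) ≤
      ((n - 2 * s : ℕ) : ℚ) * ((n - r).choose (n - s) * (n - s - 1).choose (r - 1)) := by
    exact_mod_cast choose_mul_le_sub_mul_choose_mul_choose hr hrs hn
  rw [Nat.cast_sub (by omega), Nat.cast_mul, Nat.cast_ofNat] at key
  rw [div_mul_eq_mul_div, div_mul_eq_mul_div, le_div_iff₀ hs]
  linarith
end

section
/- For every integer n ≥ 3, 1 + ∑_{s=1}^{⌊(n-1)/2⌋} ((n-2s)/s) · C(n-1, n-s) equals C(n-1, ⌊(n-1)/2⌋), and moreover C(n-1, ⌊(n-1)/2⌋) ≤ 2^{n-2}. -/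
lemma tele_aux (n : ℕ) (hn : 3 ≤ n) : ∀ m, m ≤ (n - 1) / 2 →
    1 + ∑ s ∈ Finset.Icc 1 m,
        ((n : ℚ) - 2 * (s : ℚ)) / (s : ℚ) * ((n - 1).choose (n - s) : ℚ) =
      ((n - 1).choose m : ℚ) := by
  intro m
  induction m with
  | zero => simp
  | succ m ih =>
    intro hm
    have hm' : m ≤ (n - 1) / 2 := by omega
    have h2 : 2 * (m + 1) ≤ n - 1 := by omega
    rw [Finset.sum_Icc_succ_top (by omega), ← add_assoc, ih hm']
    have hsymm : (n - 1).choose (n - (m + 1)) = (n - 1).choose m := by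
      have : n - (m + 1) = (n - 1) - m := by omega
      rw [this, Nat.choose_symm (by omega)]
    have hkey : ((n - 1).choose (m + 1) : ℚ) * (m + 1) =
        ((n - 1).choose m : ℚ) * ((n : ℚ) - (m + 1)) := by
      have := Nat.choose_succ_right_eq (n - 1) m
      have hc : ((n-1).choose (m+1) * (m+1) : ℚ) = ((n-1).choose m * ((n-1) - m) : ℕ) := by
        exact_mod_cast congrArg (Nat.cast : ℕ → ℚ) this
      rw [hc, Nat.sub_sub]
      push_cast [show 1 + m ≤ n by omega]
      ring
    rw [hsymm]
    push_cast
    have hne : ((m : ℚ) + 1) ≠ 0 := by positivity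
    field_simp
    nlinarith [hkey]

lemma bound_aux (n : ℕ) (hn : 3 ≤ n) : (n - 1).choose ((n - 1) / 2) ≤ 2 ^ (n - 2) := by
  rcases Nat.even_or_odd (n - 1) with ⟨m, hm⟩ | ⟨m, hm⟩
  · -- n - 1 = 2m, m ≥ 1
    have hm1 : 1 ≤ m := by omega
    have h1 : (n - 1) / 2 = m := by omega
    have h2 : n - 1 = 2 * m := by omega
    rw [h1, h2]
    have hsplit : (2 * m).choose m = (2 * m - 1).choose (m - 1) + (2 * m - 1).choose m := by
      have e1 : 2 * m = (2 * m - 1) + 1 := by omega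
      have e2 : m = (m - 1) + 1 := by omega
      rw [e1, e2, Nat.choose_succ_succ]
      congr 2 <;> omega
    have hsym : (2 * m - 1).choose m = (2 * m - 1).choose (m - 1) := by
      have : (2 * m - 1) - m = m - 1 := by omega
      rw [← this, Nat.choose_symm (by omega)]
    have hb : (2 * m - 1).choose (m - 1) ≤ 4 ^ (m - 1) := by
      have := Nat.choose_middle_le_pow (m - 1)
      have e : 2 * (m - 1) + 1 = 2 * m - 1 := by omega
      rwa [e] at this
    calc (2 * m).choose m ≤ 2 * 4 ^ (m - 1) := by omega
      _ = 2 ^ (n - 2) := by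
          have : n - 2 = 2 * (m - 1) + 1 := by omega
          rw [this, pow_succ, pow_mul]; ring
  · -- n - 1 = 2m + 1
    have h1 : (n - 1) / 2 = m := by omega
    have h2 : n - 1 = 2 * m + 1 := by omega
    rw [h1, h2]
    calc (2 * m + 1).choose m ≤ 4 ^ m := Nat.choose_middle_le_pow m
      _ = 2 ^ (n - 2) := by
          have : n - 2 = 2 * m := by omega
          rw [this, pow_mul]; norm_num

/-- For every `n ≥ 3`,
`1 + ∑_{s=1}^{⌊(n-1)/2⌋} ((n-2s)/s) C(n-1, n-s) = C(n-1, ⌊(n-1)/2⌋)` (in `ℚ`), and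
`C(n-1, ⌊(n-1)/2⌋) ≤ 2^(n-2)`. -/
theorem sum_A1s_eq_central_binom (n : ℕ) (hn : 3 ≤ n) :
    (1 + ∑ s ∈ Finset.Icc 1 ((n - 1) / 2),
        ((n : ℚ) - 2 * (s : ℚ)) / (s : ℚ) * ((n - 1).choose (n - s) : ℚ) =
      ((n - 1).choose ((n - 1) / 2) : ℚ)) ∧
    (n - 1).choose ((n - 1) / 2) ≤ 2 ^ (n - 2) := by
  exact ⟨tele_aux n hn _ le_rfl, bound_aux n hn⟩
end

section
/- Let (F_ν) denote the 0-based Fibonacci numbers. Then for every integer n ≥ 2, (n-2)·2^{n-2} + n ≤ F_{2n-1}, and for every integer n ≥ 9, (n-2)·2^{n-2} + n ≤ F_{2n-2}. -/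
/-!
Along the odd and the even indices the Fibonacci numbers grow by a factor `φ² ≈ 2.6` per step,
while `m 2^m` only grows by a factor slightly above `2`. Concretely, `F (2m+4) = 2 F (2m+2) + F (2m+1)`,
and `F (2m+1) ≥ 2^(m+1)` pays for the extra `2^(m+1)` in `(m+1) 2^(m+1) = 2 (m 2^m) + 2^(m+1)`.
So one induction starting at `m = 7` handles the even indices; the odd ones follow by monotonicity,
and the finitely many remaining cases are checked by computation.
-/

open Nat

theorem two_pow_succ_le_fib_two_mul_add_one {m : ℕ} (hm : 4 ≤ m) :
    2 ^ (m + 1) ≤ fib (2 * m + 1) := by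
  induction m, hm using Nat.le_induction with
  | base => decide
  | succ m _ ih =>
    have hmono : fib (2 * m + 1) ≤ fib (2 * m + 2) := fib_mono (by omega)
    have hrec : fib (2 * (m + 1) + 1) = fib (2 * m + 1) + fib (2 * m + 2) := fib_add_two
    rw [hrec, pow_succ]
    omega

theorem mul_two_pow_add_le_fib_two_mul_add_two {m : ℕ} (hm : 7 ≤ m) :
    m * 2 ^ m + m + 2 ≤ fib (2 * m + 2) := by
  induction m, hm using Nat.le_induction with
  | base => decide
  | succ m hm ih =>
    have hodd := two_pow_succ_le_fib_two_mul_add_one (m := m) (by omega)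
    have hrec : fib (2 * (m + 1) + 2) = 2 * fib (2 * m + 2) + fib (2 * m + 1) := by
      have h3 : fib (2 * m + 3) = fib (2 * m + 1) + fib (2 * m + 2) := fib_add_two
      have h4 : fib (2 * m + 4) = fib (2 * m + 2) + fib (2 * m + 3) := fib_add_two
      rw [show 2 * (m + 1) + 2 = 2 * m + 4 by ring, h4, h3]
      ring
    calc (m + 1) * 2 ^ (m + 1) + (m + 1) + 2
        ≤ 2 * (m * 2 ^ m + m + 2) + 2 ^ (m + 1) := by rw [pow_succ]; nlinarith
      _ ≤ 2 * fib (2 * m + 2) + fib (2 * m + 1) := by omega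
      _ = fib (2 * (m + 1) + 2) := hrec.symm

/-- For every `n ≥ 2`, `(n-2) 2^(n-2) + n ≤ F (2n-1)`, and
for every `n ≥ 9`, `(n-2) 2^(n-2) + n ≤ F (2n-2)`. -/
theorem n_two_pow_le_fib :
    (∀ n : ℕ, 2 ≤ n → (n - 2) * 2 ^ (n - 2) + n ≤ Nat.fib (2 * n - 1)) ∧
    (∀ n : ℕ, 9 ≤ n → (n - 2) * 2 ^ (n - 2) + n ≤ Nat.fib (2 * n - 2)) := by
  have even_index : ∀ n : ℕ, 9 ≤ n → (n - 2) * 2 ^ (n - 2) + n ≤ fib (2 * n - 2) := by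
    intro n hn
    obtain ⟨m, rfl⟩ : ∃ m, n = m + 2 := ⟨n - 2, by omega⟩
    rw [Nat.add_sub_cancel, show 2 * (m + 2) - 2 = 2 * m + 2 by omega, ← add_assoc]
    exact mul_two_pow_add_le_fib_two_mul_add_two (by omega)
  refine ⟨fun n hn => ?_, even_index⟩
  rcases le_or_gt n 8 with hsmall | hlarge
  · interval_cases n <;> decide
  · exact (even_index n hlarge).trans (fib_mono (by omega))
end

section
/- Let X be a set with a total order making it a Hall order context: let A be a λ-stable nonempty subset of the free magma Br(X) (i.e., the left factor of every non-leaf element of A lies in A), equipped with a Hall order (a total order on A such that λ(t) < t for all t ∈ A with |t| > 1). Then there exists a Hall order on all of Br(X) extending the given order on A. -/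
/-!
Send each `t` to its anchor: the first of `t, λ t, λ λ t, …` that lies in `A` (or `⊥` if there is
none), and order `Br(X)` lexicographically by anchor (ordered as in `A`), then by length, then by an
arbitrary well-order. On `A` the anchor is the element itself, so the order extends the given one.
If `t ∉ A`, then `λ t` has the same anchor as `t` and is shorter; if `t ∈ A` is not a leaf, then
`λ t ∈ A` by λ-stability and the anchors themselves compare as `λ t < t`.
-/

/-- The left factor of an element of the free magma (a leaf is its own left factor). -/
def FreeMagma.leftFactor {X : Type*} : FreeMagma X → FreeMagma X
  | FreeMagma.of a => FreeMagma.of a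
  | FreeMagma.mul x _ => x

/-- The length (number of leaves) of an element of the free magma. -/
def FreeMagma.magmaLength {X : Type*} : FreeMagma X → ℕ
  | FreeMagma.of _ => 1
  | FreeMagma.mul x y => x.magmaLength + y.magmaLength

theorem isStrictTotalOrder_subrel {α : Type*} {A : Set α} {r : α → α → Prop}
    (hirr : ∀ a ∈ A, ¬ r a a)
    (htrans : ∀ a ∈ A, ∀ b ∈ A, ∀ c ∈ A, r a b → r b c → r a c)
    (htotal : ∀ a ∈ A, ∀ b ∈ A, a = b ∨ r a b ∨ r b a) :
    IsStrictTotalOrder A (Subrel r (· ∈ A)) where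
  irrefl a := hirr a a.2
  trans a b c := htrans a a.2 b b.2 c c.2
  trichotomous a b hab hba :=
    Subtype.ext ((htotal a a.2 b b.2).resolve_right (not_or_intro hab hba))

namespace FreeMagma

variable {X : Type*}

theorem one_le_magmaLength : ∀ t : FreeMagma X, 1 ≤ t.magmaLength
  | of _ => le_rfl
  | mul x _ => (one_le_magmaLength x).trans (Nat.le_add_right _ _)

theorem magmaLength_leftFactor_lt {t : FreeMagma X} (ht : 1 < t.magmaLength) :
    t.leftFactor.magmaLength < t.magmaLength := by
  cases t with
  | of _ => exact absurd ht (lt_irrefl 1)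
  | mul x y => exact Nat.lt_add_of_pos_right (one_le_magmaLength y)

variable (A : Set (FreeMagma X))

open scoped Classical in
noncomputable def firstLeftFactorIn : FreeMagma X → WithBot A
  | of x => if h : of x ∈ A then ((⟨of x, h⟩ : A) : WithBot A) else ⊥
  | mul x y => if h : mul x y ∈ A then ((⟨mul x y, h⟩ : A) : WithBot A) else firstLeftFactorIn x

variable {A}

theorem firstLeftFactorIn_of_mem {t : FreeMagma X} (ht : t ∈ A) :
    firstLeftFactorIn A t = ((⟨t, ht⟩ : A) : WithBot A) := by
  cases t <;> exact dif_pos ht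

theorem firstLeftFactorIn_leftFactor_of_notMem {t : FreeMagma X} (ht : t ∉ A) :
    firstLeftFactorIn A t.leftFactor = firstLeftFactorIn A t := by
  cases t with
  | of _ => rfl
  | mul _ _ => rw [leftFactor, firstLeftFactorIn, dif_neg ht]

variable (A) [LinearOrder A]

def hallExtension : FreeMagma X → FreeMagma X → Prop :=
  Function.onFun (Prod.Lex (· < ·) (Prod.Lex (· < ·) WellOrderingRel))
    fun t => (firstLeftFactorIn A t, t.magmaLength, t)

theorem isStrictTotalOrder_hallExtension : IsStrictTotalOrder (FreeMagma X) (hallExtension A) :=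
  have key_injective : Function.Injective fun t : FreeMagma X =>
      (firstLeftFactorIn A t, t.magmaLength, t) := fun _ _ h => congrArg (·.2.2) h
  have : IsStrictTotalOrder _ (Prod.Lex (α := WithBot A) (· < ·)
      (Prod.Lex (α := ℕ) (· < ·) (@WellOrderingRel (FreeMagma X)))) := {}
  key_injective.isStrictTotalOrder_onFun _

theorem hallExtension_coe_iff {a b : A} : hallExtension A a b ↔ a < b := by
  rw [hallExtension, Function.onFun, firstLeftFactorIn_of_mem a.2, firstLeftFactorIn_of_mem b.2,
    Subtype.coe_eta, Subtype.coe_eta, Prod.lex_def, WithBot.coe_lt_coe, WithBot.coe_inj]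
  refine ⟨?_, Or.inl⟩
  rintro (hab | ⟨rfl, hab⟩)
  · exact hab
  · exact absurd hab (irrefl _)

theorem hallExtension_leftFactor
    (hstable : ∀ t ∈ A, 1 < t.magmaLength → t.leftFactor ∈ A)
    (hhall : ∀ a : A, 1 < a.1.magmaLength → ∀ h : a.1.leftFactor ∈ A, (⟨a.1.leftFactor, h⟩ : A) < a)
    {t : FreeMagma X} (ht : 1 < t.magmaLength) : hallExtension A t.leftFactor t := by
  by_cases htA : t ∈ A
  · have hleft := hstable t htA ht
    exact (hallExtension_coe_iff A (a := ⟨_, hleft⟩) (b := ⟨t, htA⟩)).2 (hhall ⟨t, htA⟩ ht hleft)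
  · simp only [hallExtension, Function.onFun, firstLeftFactorIn_leftFactor_of_notMem htA]
    exact Prod.Lex.right _ (Prod.Lex.left _ _ (magmaLength_leftFactor_lt ht))

end FreeMagma

open FreeMagma in
theorem exists_hall_order_extension_general {X : Type*} (A : Set (FreeMagma X))
    (hstable : ∀ t ∈ A, 1 < t.magmaLength → t.leftFactor ∈ A)
    (r : FreeMagma X → FreeMagma X → Prop)
    (hirr : ∀ a ∈ A, ¬ r a a)
    (htrans : ∀ a ∈ A, ∀ b ∈ A, ∀ c ∈ A, r a b → r b c → r a c)
    (htotal : ∀ a ∈ A, ∀ b ∈ A, a = b ∨ r a b ∨ r b a)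
    (hhall : ∀ t ∈ A, 1 < t.magmaLength → r t.leftFactor t) :
    ∃ r' : FreeMagma X → FreeMagma X → Prop,
      IsStrictTotalOrder (FreeMagma X) r' ∧
      (∀ t : FreeMagma X, 1 < t.magmaLength → r' t.leftFactor t) ∧
      (∀ a ∈ A, ∀ b ∈ A, (r a b ↔ r' a b)) := by
  classical
  have := isStrictTotalOrder_subrel hirr htrans htotal
  let : LinearOrder A := linearOrderOfSTO (Subrel r (· ∈ A))
  exact ⟨hallExtension A, isStrictTotalOrder_hallExtension A,
    fun t ht => hallExtension_leftFactor A hstable (fun a ha _ => hhall a a.2 ha) ht,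
    fun a ha b hb => (hallExtension_coe_iff A (a := ⟨a, ha⟩) (b := ⟨b, hb⟩)).symm⟩

/-- Extension of Hall orders: if `A` is a nonempty λ-stable subset of `FreeMagma X`
equipped with a (strict) total order `r` such that `λ(t) < t` for every non-leaf
`t ∈ A`, then there is a strict total order on all of `FreeMagma X` with the same
property, extending `r` on `A`. -/
theorem exists_hall_order_extension {X : Type*} (A : Set (FreeMagma X))
    (hA : A.Nonempty)
    (hstable : ∀ t ∈ A, 1 < t.magmaLength → t.leftFactor ∈ A)
    (r : FreeMagma X → FreeMagma X → Prop)
    (hirr : ∀ a ∈ A, ¬ r a a)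
    (htrans : ∀ a ∈ A, ∀ b ∈ A, ∀ c ∈ A, r a b → r b c → r a c)
    (htotal : ∀ a ∈ A, ∀ b ∈ A, a = b ∨ r a b ∨ r b a)
    (hhall : ∀ t ∈ A, 1 < t.magmaLength → r t.leftFactor t) :
    ∃ r' : FreeMagma X → FreeMagma X → Prop,
      IsStrictTotalOrder (FreeMagma X) r' ∧
      (∀ t : FreeMagma X, 1 < t.magmaLength → r' t.leftFactor t) ∧
      (∀ a ∈ A, ∀ b ∈ A, (r a b ↔ r' a b)) :=
  exists_hall_order_extension_general A hstable r hirr htrans htotal hhall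
end

section
/- Let B be a Hall set in the free magma Br(X) over a set X with |X| ≥ 2, and let a ∈ B. Then the set B_a := {a} ∪ {b ∈ B : (a,b) ∈ B} is an alphabetic subset of B, i.e., for all b₁, b₂ ∈ B_a with b₁ < b₂ one has (b₁, b₂) ∈ B. -/
/-- A Hall set in the free magma `Br(X)`, in Viennot's sense: a subset `carrier`
equipped with a strict total order `lt` on it such that `X ⊆ carrier`,
`(b₁, b₂) ∈ carrier` iff `b₁, b₂ ∈ carrier`, `b₁ < b₂` and either `b₂` is a leaf
or `λ(b₂) ≤ b₁`, and `b₁ < (b₁, b₂)` whenever `(b₁, b₂) ∈ carrier`. -/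
structure HallSet (X : Type*) where
  carrier : Set (FreeMagma X)
  lt : FreeMagma X → FreeMagma X → Prop
  lt_irrefl : ∀ a ∈ carrier, ¬ lt a a
  lt_trans : ∀ a ∈ carrier, ∀ b ∈ carrier, ∀ c ∈ carrier, lt a b → lt b c → lt a c
  lt_total : ∀ a ∈ carrier, ∀ b ∈ carrier, a = b ∨ lt a b ∨ lt b a
  of_mem : ∀ x : X, FreeMagma.of x ∈ carrier
  mul_mem_iff : ∀ b₁ b₂ : FreeMagma X,
    b₁ * b₂ ∈ carrier ↔
      b₁ ∈ carrier ∧ b₂ ∈ carrier ∧ lt b₁ b₂ ∧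
        ((∃ x : X, b₂ = FreeMagma.of x) ∨ b₂.leftFactor = b₁ ∨ lt b₂.leftFactor b₁)
  lt_mul : ∀ b₁ b₂ : FreeMagma X, b₁ * b₂ ∈ carrier → lt b₁ (b₁ * b₂)

/-- A subset `A` of a Hall set is *alphabetic* when `A` is contained in the Hall set
and the product of any two `<`-ordered elements of `A` again lies in the Hall set. -/
def HallSet.Alphabetic {X : Type*} (H : HallSet X) (A : Set (FreeMagma X)) : Prop :=
  A ⊆ H.carrier ∧ ∀ a₁ ∈ A, ∀ a₂ ∈ A, H.lt a₁ a₂ → a₁ * a₂ ∈ H.carrier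

/-- For `a` in a Hall set `B` (over `X` with at least two elements), the set
`B_a = {a} ∪ {b : (a,b) ∈ B}` is an alphabetic subset of `B`. -/
theorem hallSet_Ba_alphabetic {X : Type*} (hX : ∃ x y : X, x ≠ y)
    (H : HallSet X) (a : FreeMagma X) (ha : a ∈ H.carrier) :
    H.Alphabetic ({a} ∪ {b | b ∈ H.carrier ∧ a * b ∈ H.carrier}) := by
  constructor
  · rintro b (rfl | hb)
    · exact ha
    · exact hb.1
  · rintro b₁ hb₁ b₂ hb₂ hlt
    rcases hb₂ with rfl | ⟨hb₂, hab₂⟩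
    · -- here a has been replaced by b₂
      rcases hb₁ with rfl | ⟨hb₁, hab₁⟩
      · exact absurd hlt (H.lt_irrefl _ ha)
      · have hlt' := (H.mul_mem_iff b₂ b₁).mp hab₁
        exact absurd (H.lt_trans _ ha _ hb₁ _ ha hlt'.2.2.1 hlt)
          (H.lt_irrefl _ ha)
    · rcases hb₁ with rfl | ⟨hb₁, hab₁⟩
      · exact hab₂
      · have h1 := (H.mul_mem_iff a b₁).mp hab₁
        have h2 := (H.mul_mem_iff a b₂).mp hab₂
        have halt : H.lt a b₁ := h1.2.2.1
        refine (H.mul_mem_iff b₁ b₂).mpr ⟨hb₁, hb₂, hlt, ?_⟩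
        rcases h2.2.2.2 with hleaf | heq | hla
        · exact Or.inl hleaf
        · exact Or.inr (Or.inr (heq ▸ halt))
        · refine Or.inr (Or.inr ?_)
          have hlf : b₂.leftFactor ∈ H.carrier := by
            cases b₂ with
            | of x => exact hb₂
            | mul x y => exact ((H.mul_mem_iff x y).mp hb₂).1
          exact H.lt_trans _ hlf _ ha _ hb₁ hla halt
end

section
/- Let B ⊆ Br(X) be a Hall set and A ⊆ B an alphabetic subset admitting a minimum a₀ = min A. Then for every a ∈ A with a ≠ a₀, the set A ∪ {(a₀, a)} is alphabetic. -/
/-- If `A` is an alphabetic subset of a Hall set `B` with minimum `a₀`, then for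
every `a ∈ A` with `a ≠ a₀`, the set `A ∪ {(a₀, a)}` is alphabetic. -/
theorem alphabetic_insert_min_mul {X : Type*} (H : HallSet X)
    (A : Set (FreeMagma X)) (hA : H.Alphabetic A)
    (a₀ : FreeMagma X) (ha₀ : a₀ ∈ A)
    (hmin : ∀ a ∈ A, a ≠ a₀ → H.lt a₀ a)
    (a : FreeMagma X) (ha : a ∈ A) (hne : a ≠ a₀) :
    H.Alphabetic (A ∪ {a₀ * a}) := by
  obtain ⟨hAsub, hAmul⟩ := hA
  have h0a : H.lt a₀ a := hmin a ha hne
  have hm : a₀ * a ∈ H.carrier := hAmul a₀ ha₀ a ha h0a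
  have h0m : H.lt a₀ (a₀ * a) := H.lt_mul a₀ a hm
  constructor
  · rintro x (hx | rfl)
    · exact hAsub hx
    · exact hm
  · rintro a₁ (h₁ | h₁) a₂ (h₂ | h₂) hlt
    · exact hAmul a₁ h₁ a₂ h₂ hlt
    · -- a₂ = a₀ * a
      rw [Set.mem_singleton_iff] at h₂; subst h₂
      rw [H.mul_mem_iff]
      refine ⟨hAsub h₁, hm, hlt, Or.inr ?_⟩
      show (a₀ * a).leftFactor = a₁ ∨ H.lt (a₀ * a).leftFactor a₁
      by_cases he : a₁ = a₀
      · exact Or.inl he.symm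
      · exact Or.inr (hmin a₁ h₁ he)
    · -- a₁ = a₀ * a
      rw [Set.mem_singleton_iff] at h₁; subst h₁
      have hne2 : a₂ ≠ a₀ := fun h => H.lt_irrefl a₀ (hAsub ha₀)
        (H.lt_trans a₀ (hAsub ha₀) (a₀ * a) hm a₀ (hAsub ha₀) h0m (h ▸ hlt))
      have h0a2 : H.lt a₀ a₂ := hmin a₂ h₂ hne2
      have hm2 : a₀ * a₂ ∈ H.carrier := hAmul a₀ ha₀ a₂ h₂ h0a2
      rw [H.mul_mem_iff]
      refine ⟨hm, hAsub h₂, hlt, ?_⟩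
      rw [H.mul_mem_iff] at hm2
      rcases hm2.2.2.2 with hleaf | hf | hf
      · exact Or.inl hleaf
      · refine Or.inr (Or.inr ?_)
        rw [hf]; exact h0m
      · have hlf : a₂.leftFactor ∈ H.carrier := by
          cases a₂ with
          | of x => exact hAsub h₂
          | mul c d => exact ((H.mul_mem_iff c d).mp (hAsub h₂)).1
        exact Or.inr (Or.inr (H.lt_trans _ hlf _ (hAsub ha₀) _ hm hf h0m))
    · rw [Set.mem_singleton_iff] at h₁ h₂; subst h₁; subst h₂
      exact absurd hlt (H.lt_irrefl _ hm)
end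

section
/- Let B ⊆ Br(X) be a Hall set and a, b ∈ B with (a,b) ∈ B. Then there exists a unique r ∈ ℕ_{>0} ∪ {+∞} such that: for all n with 0 ≤ n ≤ r, the right-iterated bracket ((...((a,b),b)...),b) with n copies of b belongs to B; and for every finite n > r, adjoining (n - r) left brackets by b to the r-fold right-iterated bracket yields an element of B. Moreover, for each n with 0 ≤ n ≤ r-1, the n-fold right-iterated bracket is < b, and if r is finite, then b < the r-fold right-iterated bracket. -/
/-- Right-iterated bracketing by `b` starting from `a`:
`rIter a b n = ((...((a,b),b)...),b)` with `n` copies of `b`. -/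
def rIter {X : Type*} (a b : FreeMagma X) : ℕ → FreeMagma X
  | 0 => a
  | n + 1 => rIter a b n * b

/-- Left-iterated bracketing by `b`: `lIter b n t = (b,(b,...,(b,t)...))`
with `n` copies of `b`. -/
def lIter {X : Type*} (b : FreeMagma X) : ℕ → FreeMagma X → FreeMagma X
  | 0, t => t
  | n + 1, t => b * lIter b n t

namespace HallAux
variable {X : Type*}

def len : FreeMagma X → ℕ
  | FreeMagma.of _ => 1
  | FreeMagma.mul x y => len x + len y

lemma len_mul (x y : FreeMagma X) : len (x * y) = len x + len y := rfl

lemma len_pos (t : FreeMagma X) : 1 ≤ len t := by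
  induction t with
  | ih1 x => exact le_refl 1
  | ih2 x y ihx ihy => rw [len_mul]; omega

lemma len_rIter (a b : FreeMagma X) (n : ℕ) :
    len (rIter a b n) = len a + n * len b := by
  induction n with
  | zero => simp [rIter]
  | succ n ih => rw [rIter, len_mul, ih]; ring

lemma b_ne_rIter (a b : FreeMagma X) (n : ℕ) (hn : 1 ≤ n) : b ≠ rIter a b n := by
  intro h
  have := congrArg len h
  rw [len_rIter] at this
  have h1 := len_pos a
  have h2 := len_pos b
  nlinarith

variable (H : HallSet X) (a b : FreeMagma X)

lemma lf_mem (hb : b ∈ H.carrier) : b.leftFactor ∈ H.carrier := by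
  cases b with
  | of x => exact H.of_mem x
  | mul b1 b2 => exact ((H.mul_mem_iff b1 b2).mp hb).1

lemma a_le (hab : a * b ∈ H.carrier) (n : ℕ) (h : rIter a b n ∈ H.carrier) :
    a = rIter a b n ∨ H.lt a (rIter a b n) := by
  have ha := ((H.mul_mem_iff a b).mp hab).1
  induction n with
  | zero => exact Or.inl rfl
  | succ n ih =>
    have hn : rIter a b n ∈ H.carrier := ((H.mul_mem_iff _ b).mp h).1
    have hlt : H.lt (rIter a b n) (rIter a b (n+1)) := H.lt_mul (rIter a b n) b h
    rcases ih hn with heq | hlt'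
    · exact Or.inr (by nth_rewrite 1 [heq]; exact hlt)
    · exact Or.inr (H.lt_trans a ha _ hn _ h hlt' hlt)

lemma leftcond (hab : a * b ∈ H.carrier) (t : FreeMagma X) (ht : t ∈ H.carrier)
    (hat : a = t ∨ H.lt a t) :
    (∃ x : X, b = FreeMagma.of x) ∨ b.leftFactor = t ∨ H.lt b.leftFactor t := by
  obtain ⟨ha, hb, haltb, hcond⟩ := (H.mul_mem_iff a b).mp hab
  rcases hcond with hleaf | heq | hlt'
  · exact Or.inl hleaf
  · rcases hat with rfl | h
    · exact Or.inr (Or.inl heq)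
    · exact Or.inr (Or.inr (heq ▸ h))
  · refine Or.inr (Or.inr ?_)
    rcases hat with rfl | h
    · exact hlt'
    · exact H.lt_trans _ (lf_mem H b hb) _ ha _ ht hlt' h

lemma mem_succ_iff (hab : a * b ∈ H.carrier) (n : ℕ) :
    rIter a b (n+1) ∈ H.carrier ↔
      rIter a b n ∈ H.carrier ∧ H.lt (rIter a b n) b := by
  obtain ⟨ha, hb, haltb, hcond⟩ := (H.mul_mem_iff a b).mp hab
  constructor
  · intro h
    obtain ⟨h1, _, h3, _⟩ := (H.mul_mem_iff _ b).mp h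
    exact ⟨h1, h3⟩
  · rintro ⟨h1, h2⟩
    exact (H.mul_mem_iff _ b).mpr ⟨h1, hb, h2, leftcond H a b hab _ h1 (a_le H a b hab n h1)⟩

lemma b_lt (hab : a * b ∈ H.carrier) (n : ℕ) (hn : 1 ≤ n) (h : rIter a b n ∈ H.carrier)
    (hnot : ¬ H.lt (rIter a b n) b) : H.lt b (rIter a b n) := by
  have hb := ((H.mul_mem_iff a b).mp hab).2.1
  rcases H.lt_total _ h b hb with heq | hlt | hlt
  · exact absurd heq.symm (b_ne_rIter a b n hn)
  · exact absurd hlt hnot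
  · exact hlt

def Props (r : ℕ∞) : Prop :=
  1 ≤ r ∧
    (∀ n : ℕ, (n : ℕ∞) ≤ r → rIter a b n ∈ H.carrier) ∧
    (∀ r₀ n : ℕ, r = (r₀ : ℕ∞) → r₀ < n →
      lIter b (n - r₀) (rIter a b r₀) ∈ H.carrier)

lemma moreover (r : ℕ∞) (hr : Props H a b r) :
    (∀ n : ℕ, (n : ℕ∞) + 1 ≤ r → H.lt (rIter a b n) b) ∧
      (∀ r₀ : ℕ, r = (r₀ : ℕ∞) → H.lt b (rIter a b r₀)) := by
  constructor
  · intro n hn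
    have h : rIter a b (n+1) ∈ H.carrier := hr.2.1 (n+1) (by push_cast; exact hn)
    exact ((H.mul_mem_iff _ b).mp h).2.2.1
  · intro r₀ heq
    have h := hr.2.2 r₀ (r₀+1) heq (by omega)
    have hs : (r₀ + 1) - r₀ = 1 := by omega
    rw [hs] at h
    exact ((H.mul_mem_iff b _).mp h).2.2.1

lemma not_lt_of_props (hab : a * b ∈ H.carrier) (r₁ r₂ : ℕ∞) (h₁ : Props H a b r₁) (h₂ : Props H a b r₂) :
    ¬ r₁ < r₂ := by
  intro hlt
  have hb := ((H.mul_mem_iff a b).mp hab).2.1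
  have hfin : r₁ ≠ ⊤ := (hlt.trans_le le_top).ne
  lift r₁ to ℕ using hfin with r₀
  have hblt : H.lt b (rIter a b r₀) := (moreover H a b _ h₁).2 r₀ rfl
  have hmem : rIter a b r₀ ∈ H.carrier := h₁.2.1 r₀ le_rfl
  have hltb : H.lt (rIter a b r₀) b :=
    (moreover H a b _ h₂).1 r₀ (Order.add_one_le_of_lt hlt)
  exact H.lt_irrefl b hb (H.lt_trans b hb _ hmem b hb hblt hltb)

lemma uniq (hab : a * b ∈ H.carrier) (r₁ r₂ : ℕ∞) (h₁ : Props H a b r₁) (h₂ : Props H a b r₂) : r₁ = r₂ := by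
  rcases lt_trichotomy r₁ r₂ with h | h | h
  · exact absurd h (not_lt_of_props H a b hab r₁ r₂ h₁ h₂)
  · exact h
  · exact absurd h (not_lt_of_props H a b hab r₂ r₁ h₂ h₁)

lemma exists_props (hab : a * b ∈ H.carrier) : ∃ r : ℕ∞, Props H a b r := by
  classical
  obtain ⟨ha, hb, haltb, hcond⟩ := (H.mul_mem_iff a b).mp hab
  by_cases hall : ∀ n, rIter a b n ∈ H.carrier
  · refine ⟨⊤, le_top, fun n _ => hall n, fun r₀ n h => absurd h (by simp)⟩
  · push_neg at hall
    obtain ⟨m, hms, hmin⟩ : ∃ m, rIter a b m ∉ H.carrier ∧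
        ∀ k, k < m → rIter a b k ∈ H.carrier :=
      ⟨Nat.find hall, Nat.find_spec hall, fun k hk =>
        not_not.mp (Nat.find_min hall hk)⟩
    have hm2 : 2 ≤ m := by
      rcases Nat.lt_or_ge m 2 with h | h
      · interval_cases m
        · exact absurd ha hms
        · exact absurd hab hms
      · exact h
    obtain ⟨s, rfl⟩ : ∃ s, m = s + 2 := ⟨m - 2, by omega⟩
    have hmemr₀ : rIter a b (s+1) ∈ H.carrier := hmin (s+1) (by omega)
    have hnot : ¬ H.lt (rIter a b (s+1)) b := by
      intro hlt
      exact hms ((mem_succ_iff H a b hab (s+1)).mpr ⟨hmemr₀, hlt⟩)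
    have hblt : H.lt b (rIter a b (s+1)) := b_lt H a b hab (s+1) (by omega) hmemr₀ hnot
    have hsltb : H.lt (rIter a b s) b := ((H.mul_mem_iff _ b).mp hmemr₀).2.2.1
    have lIterMem : ∀ k, lIter b k (rIter a b (s+1)) ∈ H.carrier ∧
        H.lt b (lIter b k (rIter a b (s+1))) := by
      intro k
      induction k with
      | zero => exact ⟨hmemr₀, hblt⟩
      | succ k ih =>
        have hcond' : (∃ x : X, lIter b k (rIter a b (s+1)) = FreeMagma.of x) ∨
            (lIter b k (rIter a b (s+1))).leftFactor = b ∨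
            H.lt (lIter b k (rIter a b (s+1))).leftFactor b := by
          cases k with
          | zero => exact Or.inr (Or.inr hsltb)
          | succ k => exact Or.inr (Or.inl rfl)
        have hmem : b * lIter b k (rIter a b (s+1)) ∈ H.carrier :=
          (H.mul_mem_iff b _).mpr ⟨hb, ih.1, ih.2, hcond'⟩
        exact ⟨hmem, H.lt_mul b _ hmem⟩
    refine ⟨(((s+1 : ℕ)) : ℕ∞), by exact_mod_cast (by omega : 1 ≤ s+1), ?_, ?_⟩
    · intro n hn
      have : n ≤ s+1 := by exact_mod_cast hn
      exact hmin n (by omega)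
    · intro r₀' n heq hn
      have h' : r₀' = s+1 := by exact_mod_cast heq.symm
      rw [h']
      exact (lIterMem (n - (s+1))).1

end HallAux

/-- Let `B` be a Hall set and `a, b ∈ B` with `(a,b) ∈ B`. There exists a unique
`r ∈ ℕ_{>0} ∪ {+∞}` such that the `n`-fold right-iterated bracket
`underline-ad_b^n(a)` belongs to `B` for all `n ≤ r`, and for every finite `n > r`
the element obtained by adjoining `n - r` left brackets by `b` to the `r`-fold
right-iterated bracket belongs to `B`.  Moreover any such `r` satisfies:
`underline-ad_b^n(a) < b` for `n ≤ r - 1`, and if `r` is finite then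
`b < underline-ad_b^r(a)`. -/
theorem hallSet_exists_unique_r {X : Type*} (H : HallSet X)
    (a b : FreeMagma X) (hab : a * b ∈ H.carrier) :
    (∃! r : ℕ∞, 1 ≤ r ∧
        (∀ n : ℕ, (n : ℕ∞) ≤ r → rIter a b n ∈ H.carrier) ∧
        (∀ r₀ n : ℕ, r = (r₀ : ℕ∞) → r₀ < n →
          lIter b (n - r₀) (rIter a b r₀) ∈ H.carrier)) ∧
    (∀ r : ℕ∞,
      (1 ≤ r ∧
        (∀ n : ℕ, (n : ℕ∞) ≤ r → rIter a b n ∈ H.carrier) ∧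
        (∀ r₀ n : ℕ, r = (r₀ : ℕ∞) → r₀ < n →
          lIter b (n - r₀) (rIter a b r₀) ∈ H.carrier)) →
      ((∀ n : ℕ, (n : ℕ∞) + 1 ≤ r → H.lt (rIter a b n) b) ∧
        (∀ r₀ : ℕ, r = (r₀ : ℕ∞) → H.lt b (rIter a b r₀)))) := by
  obtain ⟨r, hr⟩ := HallAux.exists_props H a b hab
  exact ⟨⟨r, hr, fun y hy => HallAux.uniq H a b hab y r hy hr⟩,
    fun r' hr' => HallAux.moreover H a b r' hr'⟩
end

section
/- Let B ⊆ Br(X) be a Hall set, L(X) the free Lie algebra over X with basis e(B). For a < b in B, define the relative folding T_a(b) recursively: T_a(b) = b if (a,b) ∈ B, and otherwise T_a(b) = ⟨T_a(λ(b)), T_a(μ(b))⟩; let θ_a(b) be the number of leaves of T_a(b). Then for all a ≤ ã < b in B, θ_{ã}(b) ≤ θ_a(b). -/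
open Classical in
/-- The length `θ_a(b)` of the relative folding `T_a(b)` of `b` with respect to `a`:
`θ_a(b) = 1` if `(a,b) ∈ B` (or `b` is a leaf), and otherwise
`θ_a(b) = θ_a(λ(b)) + θ_a(μ(b))`. -/
noncomputable def HallSet.theta {X : Type*} (H : HallSet X) (a : FreeMagma X) :
    FreeMagma X → ℕ
  | FreeMagma.of _ => 1
  | FreeMagma.mul b₁ b₂ =>
      if a * (b₁ * b₂) ∈ H.carrier then 1
      else H.theta a b₁ + H.theta a b₂
  termination_by structural t => t


theorem one_le_theta {X : Type*} (H : HallSet X) (a : FreeMagma X) :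
    ∀ b : FreeMagma X, 1 ≤ H.theta a b := by
  intro b
  induction b using FreeMagma.rec with
  | of x => simp [HallSet.theta]
  | mul b₁ b₂ ih₁ ih₂ =>
    rw [HallSet.theta]
    split
    · exact le_refl 1
    · omega

/-- Monotonicity of the length of the relative folding: for `a ≤ a' < b` in a Hall
set `B`, one has `θ_{a'}(b) ≤ θ_a(b)`. -/
theorem theta_antitone {X : Type*} (H : HallSet X) (a a' b : FreeMagma X)
    (ha : a ∈ H.carrier) (ha' : a' ∈ H.carrier) (hb : b ∈ H.carrier)
    (hle : a = a' ∨ H.lt a a') (hlt : H.lt a' b) :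
    H.theta a' b ≤ H.theta a b := by
  induction b using FreeMagma.rec with
  | of x => simp [HallSet.theta]
  | mul b₁ b₂ ih₁ ih₂ =>
    by_cases h' : a' * (b₁ * b₂) ∈ H.carrier
    · rw [HallSet.theta, if_pos h']
      exact one_le_theta H a _
    · -- a * (b₁*b₂) ∉ carrier either
      have hb' := (H.mul_mem_iff b₁ b₂).mp hb
      obtain ⟨hb₁, hb₂, hlt12, _⟩ := hb'
      have h : a * (b₁ * b₂) ∉ H.carrier := by
        intro hmem
        obtain ⟨_, _, _, hc⟩ := (H.mul_mem_iff a (b₁ * b₂)).mp hmem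
        apply h'
        rw [H.mul_mem_iff]
        refine ⟨ha', hb, hlt, ?_⟩
        rcases hc with ⟨x, hx⟩ | hc | hc
        · exact Or.inl ⟨x, hx⟩
        · rcases hle with rfl | hle
          · exact Or.inr (Or.inl hc)
          · refine Or.inr (Or.inr ?_)
            rw [hc]; exact hle
        · rcases hle with rfl | hle
          · exact Or.inr (Or.inr hc)
          · refine Or.inr (Or.inr ?_)
            have hlf : (b₁ * b₂).leftFactor = b₁ := rfl
            rw [hlf] at hc ⊢
            exact H.lt_trans b₁ hb₁ a ha a' ha' hc hle
      -- a' < b₁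
      have hlt1 : H.lt a' b₁ := by
        rcases H.lt_total a' ha' b₁ hb₁ with rfl | h1 | h1
        · exact absurd ((H.mul_mem_iff a' (a' * b₂)).mpr
            ⟨ha', hb, hlt, Or.inr (Or.inl rfl)⟩) h'
        · exact h1
        · exfalso
          apply h'
          rw [H.mul_mem_iff]
          exact ⟨ha', hb, hlt, Or.inr (Or.inr h1)⟩
      have hlt2 : H.lt a' b₂ := H.lt_trans a' ha' b₁ hb₁ b₂ hb₂ hlt1 hlt12
      rw [HallSet.theta, HallSet.theta, if_neg h', if_neg h]
      exact Nat.add_le_add (ih₁ hb₁ hlt1) (ih₂ hb₂ hlt2)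
end

section
/- Let X = {X₀, X₁} with a Hall set B ⊆ Br(X) such that X₀ < X₁. Then for every a < b in B with |b| ≥ 2, the length θ_a(b) of the relative folding of b with respect to a satisfies θ_a(b) ≤ |b| - 1. -/
@[simp] lemma magmaLength_of {X : Type*} (x : X) :
    (FreeMagma.of x).magmaLength = 1 := rfl

@[simp] lemma magmaLength_mul {X : Type*} (x y : FreeMagma X) :
    (x * y).magmaLength = x.magmaLength + y.magmaLength := rfl

@[simp] lemma magmaLength_mul' {X : Type*} (x y : FreeMagma X) :
    (FreeMagma.mul x y).magmaLength = x.magmaLength + y.magmaLength := rfl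

lemma one_le_length {X : Type*} (c : FreeMagma X) : 1 ≤ c.magmaLength := by
  induction c with
  | ih1 _ => simp
  | ih2 c₁ c₂ ih₁ ih₂ => simp; omega

lemma theta_le_length (H : HallSet Bool) (a : FreeMagma Bool) :
    ∀ c : FreeMagma Bool, H.theta a c ≤ c.magmaLength := by
  intro c
  induction c with
  | ih1 x => simp [HallSet.theta, FreeMagma.magmaLength]
  | ih2 c₁ c₂ ih₁ ih₂ =>
    rw [show (c₁ * c₂ : FreeMagma Bool) = FreeMagma.mul c₁ c₂ from rfl, HallSet.theta]
    split_ifs with h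
    · have h1 := one_le_length c₁
      have h2 := one_le_length c₂
      simp; omega
    · simp; omega

lemma not_lt_false (H : HallSet Bool)
    (h01 : H.lt (FreeMagma.of false) (FreeMagma.of true)) :
    ∀ a : FreeMagma Bool, a ∈ H.carrier → ¬ H.lt a (FreeMagma.of false) := by
  intro a
  induction a with
  | ih1 x =>
    intro ha hlt
    cases x with
    | false => exact H.lt_irrefl _ ha hlt
    | true =>
      exact H.lt_irrefl _ (H.of_mem false)
        (H.lt_trans _ (H.of_mem false) _ (H.of_mem true) _ (H.of_mem false) h01 hlt)
  | ih2 a₁ a₂ ih₁ ih₂ =>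
    intro ha hlt
    have h := (H.mul_mem_iff a₁ a₂).mp ha
    have h1 : a₁ ∈ H.carrier := h.1
    have h2 := H.lt_mul a₁ a₂ ha
    exact ih₁ h1 (H.lt_trans _ h1 _ ha _ (H.of_mem false) h2 hlt)

lemma length_eq_one_iff {X : Type*} (c : FreeMagma X) :
    c.magmaLength = 1 → ∃ x : X, c = FreeMagma.of x := by
  cases c with
  | of x => exact fun _ => ⟨x, rfl⟩
  | mul c₁ c₂ =>
    intro h
    have h1 := one_le_length c₁
    have h2 := one_le_length c₂
    simp at h
    omega

/-- For `X = {X₀, X₁}` (modelled as `Bool`, with `X₀ = false` and `X₁ = true`) and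
a Hall set `B` with `X₀ < X₁`: for every `a < b` in `B` with `|b| ≥ 2`, the length
of the relative folding satisfies `θ_a(b) ≤ |b| - 1`. -/
theorem theta_le_length_sub_one_two_letters (H : HallSet Bool)
    (h01 : H.lt (FreeMagma.of false) (FreeMagma.of true))
    (a b : FreeMagma Bool) (ha : a ∈ H.carrier) (hb : b ∈ H.carrier)
    (hab : H.lt a b) (hlen : 2 ≤ b.magmaLength) :
    H.theta a b ≤ b.magmaLength - 1 := by
  induction b with
  | ih1 x => simp at hlen
  | ih2 b₁ b₂ ih₁ ih₂ =>
    rw [show (b₁ * b₂ : FreeMagma Bool) = FreeMagma.mul b₁ b₂ from rfl, HallSet.theta]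
    split_ifs with hin
    · have := one_le_length b₁
      have := one_le_length b₂
      simp at hlen ⊢
      omega
    · have hmem := (H.mul_mem_iff b₁ b₂).mp hb
      obtain ⟨hb₁, hb₂, h12, _⟩ := hmem
      -- from hin : a * (b₁ * b₂) ∉ carrier, deduce a < b₁
      have hab₁ : H.lt a b₁ := by
        rcases H.lt_total a ha b₁ hb₁ with heq | hlt | hgt
        · exfalso
          apply hin
          rw [H.mul_mem_iff]
          refine ⟨ha, hb, hab, Or.inr (Or.inl ?_)⟩
          simp [FreeMagma.leftFactor, heq]
        · exact hlt
        · exfalso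
          apply hin
          rw [H.mul_mem_iff]
          exact ⟨ha, hb, hab, Or.inr (Or.inr hgt)⟩
      have hab₂ : H.lt a b₂ := H.lt_trans _ ha _ hb₁ _ hb₂ hab₁ h12
      have l1 := one_le_length b₁
      have l2 := one_le_length b₂
      by_cases hc₁ : 2 ≤ b₁.magmaLength
      · have t1 := ih₁ hb₁ hab₁ hc₁
        have t2 := theta_le_length H a b₂
        simp
        omega
      · by_cases hc₂ : 2 ≤ b₂.magmaLength
        · have t1 := theta_le_length H a b₁
          have t2 := ih₂ hb₂ hab₂ hc₂
          simp
          omega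
        · -- both are leaves
          exfalso
          obtain ⟨x₁, rfl⟩ := length_eq_one_iff b₁ (by omega)
          obtain ⟨x₂, rfl⟩ := length_eq_one_iff b₂ (by omega)
          cases x₁ with
          | false => exact not_lt_false H h01 a ha hab₁
          | true =>
            cases x₂ with
            | false => exact not_lt_false H h01 _ (H.of_mem true) h12
            | true => exact H.lt_irrefl _ (H.of_mem true) h12
end
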